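/- arXiv:1808.07593 — 2 statements merged into one kernel-verified Lean document; each statement's English description precedes it below -/
import Mathlib

section
/- Let X be a random variable (continuous or discrete) and Y a random variable with finite outcome set 𝒴. Let p̃_{XY} be a joint distribution under which Y = f(X) for a single-valued function f, and let p_{XY} be a joint distribution with the same marginal over X, p(x) = p̃(x), satisfying |p_{XY} − p̃_{XY}|₁ ≤ ε ≤ 1/2. Set γ := −3ε·log ε + 5ε·log|𝒴|, and let F denote the IB curve of p_{XY}. Then for any r > 0 there exists α ∈ [0,1] such that the bottleneck variable T_α defined by the channel q_α(T_α = t | X = x) = α·δ(t, f(x)) + (1−α)·δ(t, 0) satisfies I_p(X;T_α) ≤ r and I_p(Y;T_α) ≥ F(r) − γ. -/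
noncomputable section

/-- `p` is a joint probability distribution on the finite product `A × B`. -/
def IsJoint {A B : Type*} [Fintype A] [Fintype B] (p : A → B → ℝ) : Prop :=
  (∀ a b, 0 ≤ p a b) ∧ (∑ a, ∑ b, p a b) = 1

/-- `κ` is a channel (conditional distribution) from `A` to the finite type `B`. -/
def IsChannel {A B : Type*} [Fintype B] (κ : A → B → ℝ) : Prop :=
  ∀ a, (∀ b, 0 ≤ κ a b) ∧ (∑ b, κ a b) = 1

/-- Marginal distribution of the first coordinate. -/
def margFst {A B : Type*} [Fintype B] (p : A → B → ℝ) : A → ℝ := fun a => ∑ b, p a b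

/-- Marginal distribution of the second coordinate. -/
def margSnd {A B : Type*} [Fintype A] (p : A → B → ℝ) : B → ℝ := fun b => ∑ a, p a b

/-- ℓ1 distance between two joint distributions. -/
def l1 {A B : Type*} [Fintype A] [Fintype B] (p q : A → B → ℝ) : ℝ :=
  ∑ a, ∑ b, |p a b - q a b|

/-- Shannon entropy of a distribution on a finite type. -/
def ent {A : Type*} [Fintype A] (q : A → ℝ) : ℝ := -∑ a, q a * Real.log (q a)

/-- Conditional entropy `H(B | A)` of the second coordinate given the first. -/
def condEnt {A B : Type*} [Fintype A] [Fintype B] (p : A → B → ℝ) : ℝ :=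
  -∑ a, ∑ b, p a b * Real.log (p a b / margFst p a)

/-- Mutual information `I(A;B)` of a joint distribution, as `H(B) - H(B|A)`. -/
def mi {A B : Type*} [Fintype A] [Fintype B] (p : A → B → ℝ) : ℝ :=
  ent (margSnd p) - condEnt p

/-- Joint distribution of `(X,T)` when `T` is generated from `X` via channel `κ`
(so that the Markov condition `Y - X - T` holds). -/
def jointXT {X Y T : Type*} [Fintype Y] (p : X → Y → ℝ) (κ : X → T → ℝ) : X → T → ℝ :=
  fun x t => (∑ y, p x y) * κ x t

/-- Joint distribution of `(T,Y)` when `T` is generated from `X` via channel `κ`. -/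
def jointTY {X Y T : Type*} [Fintype X] (p : X → Y → ℝ) (κ : X → T → ℝ) : T → Y → ℝ :=
  fun t y => ∑ x, p x y * κ x t

/-- Joint distribution of `(Y,T)` when `T` is generated from `X` via channel `κ`. -/
def jointYT {X Y T : Type*} [Fintype X] (p : X → Y → ℝ) (κ : X → T → ℝ) : Y → T → ℝ :=
  fun y t => ∑ x, p x y * κ x t

/-- The information-bottleneck curve `F(r)`: the supremum of `I(Y;T)` over all (discrete)
bottleneck variables `T` obeying the Markov condition `Y - X - T` with `I(X;T) ≤ r`. -/
def IBcurve {X Y : Type*} [Fintype X] [Fintype Y] (p : X → Y → ℝ) (r : ℝ) : ℝ :=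
  sSup { v : ℝ | ∃ (n : ℕ) (κ : X → Fin n → ℝ), IsChannel κ ∧
    mi (jointXT p κ) ≤ r ∧ v = mi (jointTY p κ) }

/-- `Y` is the deterministic function `f` of `X` under the joint distribution `p`:
given `X = x`, all conditional mass is on `f x`. -/
def Determ {X Y : Type*} (p : X → Y → ℝ) (f : X → Y) : Prop :=
  ∀ x y, y ≠ f x → p x y = 0

/-- `γ := -3ε log ε + 5ε log |𝒴|`. -/
def gam (ε : ℝ) (c : ℕ) : ℝ := -(3*ε) * Real.log ε + 5*ε * Real.log (c : ℝ)

/-- The channel defining the bottleneck variable `T_α = B_α ⬝ f(X)`: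
`T_α` equals `f(x)` with probability `α` and equals the extra symbol `0`
(modelled as `none`, a symbol outside `𝒴`) with probability `1 - α`. -/
def kappaAlpha {X Y : Type*} [DecidableEq Y] (f : X → Y) (α : ℝ) : X → Option Y → ℝ :=
  fun x t => α * (if t = some (f x) then 1 else 0) +
    (1 - α) * (if t = (none : Option Y) then 1 else 0)

/-!
For the trivial bottleneck `T_α` one computes `I(X;T_α) = α H(f X)` and `I(Y;T_α) = α I(f X; Y)`,
while data processing bounds the IB curve by `min r H(Y)`. Taking `α = min 1 (r / H(f X))`, the
loss is at most `H(Y | f X) + |H(f X) - H(Y)|`. Both terms vanish for `p̃`, under which `Y = f X`,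
and both are controlled by `|p - p̃|₁ ≤ ε` through the continuity bound
`|H(u) - H(v)| ≤ η(δ) + δ (log |𝒴| + 1)`, `δ = |u - v|₁`, `η(t) = -t log t`, applied to the law of
`Y` and, row by row, to the law of `Y` given `f X`.
-/

open Real Finset

section NegMulLog

lemma mul_negMulLog_div (W S : ℝ) : W * negMulLog (S / W) = -(S * log (S / W)) := by
  rcases eq_or_ne W 0 with rfl | hW
  · simp
  · rw [negMulLog]
    field_simp

lemma mul_log_mul_div_self (c x : ℝ) : c * x * log (c * x / c) = c * (x * log x) := by
  rcases eq_or_ne c 0 with rfl | hc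
  · simp
  · rw [mul_div_cancel_left₀ _ hc, mul_assoc]

/-- Jensen's inequality for the perspective `W ↦ W η(S / W)` of the concave `η = negMulLog`. -/
lemma sum_mul_negMulLog_le {ι : Type*} (s : Finset ι) (w x : ι → ℝ)
    (hw : ∀ i ∈ s, 0 ≤ w i) (hx : ∀ i ∈ s, 0 ≤ x i) :
    ∑ i ∈ s, w i * negMulLog (x i)
      ≤ (∑ i ∈ s, w i) * negMulLog ((∑ i ∈ s, w i * x i) / ∑ i ∈ s, w i) := by
  obtain hW | hW := (sum_nonneg hw).eq_or_lt
  · have hw0 : ∀ i ∈ s, w i = 0 := (sum_eq_zero_iff_of_nonneg hw).1 hW.symm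
    rw [← hW, zero_mul]
    exact (sum_eq_zero fun i hi => by rw [hw0 i hi, zero_mul]).le
  · have jensen : ∑ i ∈ s, (w i / ∑ j ∈ s, w j) • negMulLog (x i)
        ≤ negMulLog (∑ i ∈ s, (w i / ∑ j ∈ s, w j) • x i) :=
      concaveOn_negMulLog.le_map_sum (fun i hi => div_nonneg (hw i hi) hW.le)
        (by rw [← sum_div, div_self hW.ne']) hx
    simp only [smul_eq_mul, div_mul_eq_mul_div, ← sum_div] at jensen
    rwa [div_le_iff₀' hW] at jensen

lemma sum_negMulLog_le {ι : Type*} [Fintype ι] (d : ι → ℝ) (hd : ∀ i, 0 ≤ d i) :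
    ∑ i, negMulLog (d i) ≤ negMulLog (∑ i, d i) + (∑ i, d i) * log (Fintype.card ι) := by
  cases isEmpty_or_nonempty ι
  · simp
  have hc : (Fintype.card ι : ℝ) ≠ 0 := by positivity
  have h := sum_mul_negMulLog_le univ (fun _ => 1) d (by simp) (fun i _ => hd i)
  simp only [one_mul, sum_const, card_univ, nsmul_eq_mul, mul_one] at h
  refine h.trans_eq ?_
  rw [mul_negMulLog_div]
  rcases eq_or_ne (∑ i, d i) 0 with hD | hD
  · simp [hD]
  · rw [log_div hD hc, negMulLog]
    ring

lemma mul_log_le_mul_log {a b : ℝ} (ha : 0 ≤ a) (hab : a ≤ b) : a * log a ≤ a * log b := by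
  rcases ha.eq_or_lt with rfl | ha
  · simp
  · exact mul_le_mul_of_nonneg_left (log_le_log ha hab) ha.le

lemma negMulLog_sub_negMulLog_le {a b : ℝ} (ha : 0 ≤ a) (hab : a ≤ b) :
    negMulLog b - negMulLog a ≤ negMulLog (b - a) := by
  have h₁ := mul_log_le_mul_log ha hab
  have h₂ := mul_log_le_mul_log (sub_nonneg.2 hab) (sub_le_self b ha)
  simp only [negMulLog]
  linarith

lemma negMulLog_sub_negMulLog_le_sub {a b : ℝ} (ha : 0 ≤ a) (hab : a ≤ b) (hb : b ≤ 1) :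
    negMulLog a - negMulLog b ≤ b - a := by
  rcases ha.eq_or_lt with rfl | ha
  · linarith [negMulLog_nonneg hab hb, negMulLog_zero]
  have hlog : a * (log b - log a) ≤ b - a := by
    have h := log_le_sub_one_of_pos (div_pos (ha.trans_le hab) ha)
    rw [log_div (ha.trans_le hab).ne' ha.ne'] at h
    calc a * (log b - log a) ≤ a * (b / a - 1) := mul_le_mul_of_nonneg_left h ha.le
      _ = b - a := by field_simp
  have hb' : (b - a) * log b ≤ 0 :=
    mul_nonpos_of_nonneg_of_nonpos (sub_nonneg.2 hab) (log_nonpos (ha.le.trans hab) hb)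
  simp only [negMulLog]
  linarith

lemma abs_negMulLog_sub_le {a b : ℝ} (ha : 0 ≤ a) (ha1 : a ≤ 1) (hb : 0 ≤ b) (hb1 : b ≤ 1) :
    |negMulLog a - negMulLog b| ≤ negMulLog |a - b| + |a - b| := by
  wlog hab : a ≤ b generalizing a b
  · rw [abs_sub_comm, abs_sub_comm a]
    exact this hb hb1 ha ha1 (le_of_not_ge hab)
  rw [abs_sub_comm a, abs_of_nonneg (sub_nonneg.2 hab), abs_le]
  have := negMulLog_nonneg (sub_nonneg.2 hab) (by linarith)
  constructor
  · linarith [negMulLog_sub_negMulLog_le ha hab]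
  · linarith [negMulLog_sub_negMulLog_le_sub ha hab hb1]

/-- `δ log (ε / δ) ≤ ε / e` since `t ↦ t log (ε / t)` peaks at `t = ε / e`. -/
lemma negMulLog_le_negMulLog_add {δ ε : ℝ} (hδ : 0 ≤ δ) (hδε : δ ≤ ε) (hε : ε ≤ 1) :
    negMulLog δ ≤ negMulLog ε + ε / exp 1 := by
  rcases hδ.eq_or_lt with rfl | hδ
  · simpa using add_nonneg (negMulLog_nonneg hδε hε) (div_nonneg hδε (exp_pos 1).le)
  have hε0 : 0 < ε := hδ.trans_le hδε
  have hpeak : δ * log (ε / δ) ≤ ε / exp 1 := by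
    have h := log_le_sub_one_of_pos (div_pos (div_pos hε0 hδ) (exp_pos 1))
    rw [log_div (div_pos hε0 hδ).ne' (exp_pos 1).ne', log_exp] at h
    calc δ * log (ε / δ) ≤ δ * (ε / δ / exp 1) := mul_le_mul_of_nonneg_left (by linarith) hδ.le
      _ = ε / exp 1 := by field_simp
  have hmono : δ * log ε ≥ ε * log ε :=
    mul_le_mul_of_nonpos_right hδε (log_nonpos hε0.le hε)
  rw [log_div hε0.ne' hδ.ne'] at hpeak
  simp only [negMulLog]
  linarith

end NegMulLog

section Marginals

variable {A B : Type*}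

lemma le_margFst [Fintype B] (q : A → B → ℝ) (hq : ∀ a b, 0 ≤ q a b) (a : A) (b : B) :
    q a b ≤ margFst q a :=
  single_le_sum (fun b _ => hq a b) (mem_univ b)

lemma margFst_nonneg [Fintype B] (q : A → B → ℝ) (hq : ∀ a b, 0 ≤ q a b) (a : A) :
    0 ≤ margFst q a :=
  sum_nonneg fun b _ => hq a b

lemma margSnd_nonneg [Fintype A] [Fintype B] {q : A → B → ℝ} (hq : IsJoint q) (b : B) :
    0 ≤ margSnd q b :=
  sum_nonneg fun a _ => hq.1 a b

lemma margSnd_le_one [Fintype A] [Fintype B] {q : A → B → ℝ} (hq : IsJoint q) (b : B) :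
    margSnd q b ≤ 1 := by
  rw [← hq.2, sum_comm]
  exact single_le_sum (fun b _ => margSnd_nonneg hq b) (mem_univ b)

lemma margFst_eq_margSnd_of_determ_id [Fintype A] (q : A → A → ℝ) (hdet : Determ q id) :
    margFst q = margSnd q :=
  funext fun a => (sum_eq_single a (fun b _ hb => hdet a b hb) (by simp)).trans
    (sum_eq_single a (fun b _ hb => hdet b a (Ne.symm hb)) (by simp)).symm

lemma sum_abs_margSnd_sub_le_l1 [Fintype A] [Fintype B] (p q : A → B → ℝ) :
    ∑ b, |margSnd p b - margSnd q b| ≤ l1 p q :=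
  calc ∑ b, |margSnd p b - margSnd q b| ≤ ∑ b, ∑ a, |p a b - q a b| :=
        sum_le_sum fun b _ => by
          simp only [margSnd, ← sum_sub_distrib]
          exact abs_sum_le_sum_abs _ _
    _ = l1 p q := sum_comm

lemma l1_eq_zero_of_subsingleton [Fintype A] [Fintype B] [Subsingleton B] {p q : A → B → ℝ}
    (hm : margFst p = margFst q) : l1 p q = 0 :=
  sum_eq_zero fun a _ => sum_eq_zero fun b _ => by
    have h := congrFun hm a
    simp only [margFst, Fintype.sum_subsingleton _ b] at h
    simp [h]

end Marginals

section Entropy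

variable {A B : Type*} [Fintype A] [Fintype B]

def entModulus (c : ℕ) (δ : ℝ) : ℝ := negMulLog δ + δ * (log c + 1)

lemma ent_eq_sum_negMulLog (q : A → ℝ) : ent q = ∑ a, negMulLog (q a) := by
  simp [ent, negMulLog]

lemma abs_ent_sub_ent_le (u v : A → ℝ) (hu : ∀ a, 0 ≤ u a) (hu1 : ∀ a, u a ≤ 1)
    (hv : ∀ a, 0 ≤ v a) (hv1 : ∀ a, v a ≤ 1) :
    |ent u - ent v| ≤ entModulus (Fintype.card A) (∑ a, |u a - v a|) := by
  rw [ent_eq_sum_negMulLog, ent_eq_sum_negMulLog, ← sum_sub_distrib]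
  calc |∑ a, (negMulLog (u a) - negMulLog (v a))|
      ≤ ∑ a, |negMulLog (u a) - negMulLog (v a)| := abs_sum_le_sum_abs _ _
    _ ≤ ∑ a, (negMulLog |u a - v a| + |u a - v a|) :=
        sum_le_sum fun a _ => abs_negMulLog_sub_le (hu a) (hu1 a) (hv a) (hv1 a)
    _ ≤ entModulus (Fintype.card A) (∑ a, |u a - v a|) := by
        rw [sum_add_distrib, entModulus]
        linarith [sum_negMulLog_le (fun a => |u a - v a|) fun a => abs_nonneg _]

lemma condEnt_eq_sum_sum_mul_negMulLog (q : A → B → ℝ) :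
    condEnt q = ∑ a, ∑ b, margFst q a * negMulLog (q a b / margFst q a) := by
  simp only [condEnt, mul_negMulLog_div, sum_neg_distrib]

lemma condEnt_eq_sum_mul_ent (q : A → B → ℝ) :
    condEnt q = ∑ a, margFst q a * ent (fun b => q a b / margFst q a) := by
  simp only [condEnt_eq_sum_sum_mul_negMulLog, ent_eq_sum_negMulLog, mul_sum]

lemma condEnt_nonneg (q : A → B → ℝ) (hq : ∀ a b, 0 ≤ q a b) : 0 ≤ condEnt q := by
  rw [condEnt_eq_sum_sum_mul_negMulLog]
  have hm := margFst_nonneg q hq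
  exact sum_nonneg fun a _ => sum_nonneg fun b _ => mul_nonneg (hm a) <|
    negMulLog_nonneg (div_nonneg (hq a b) (hm a)) (div_le_one_of_le₀ (le_margFst q hq a b) (hm a))

lemma condEnt_eq_zero_of_determ (q : A → B → ℝ) (g : A → B) (hdet : Determ q g) :
    condEnt q = 0 := by
  rw [condEnt_eq_sum_sum_mul_negMulLog]
  refine sum_eq_zero fun a _ => sum_eq_zero fun b _ => ?_
  by_cases hb : b = g a
  · have hrow : margFst q a = q a b :=
      sum_eq_single b (fun b' _ hb' => hdet a b' (hb ▸ hb')) (by simp)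
    rcases eq_or_ne (q a b) 0 with h | h
    · simp [hrow, h]
    · rw [hrow, div_self h, negMulLog_one, mul_zero]
  · simp [hdet a b hb]

lemma condEnt_const_mul (c : ℝ) (q : A → B → ℝ) :
    condEnt (fun a b => c * q a b) = c * condEnt q := by
  rcases eq_or_ne c 0 with rfl | hc
  · simp [condEnt]
  simp only [condEnt, margFst, ← mul_sum, mul_div_mul_left _ _ hc, mul_assoc, mul_neg]

lemma condEnt_option (q : Option A → B → ℝ) :
    condEnt q = condEnt (fun a => q (some a))
      - ∑ b, q none b * log (q none b / margFst q none) := by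
  simp only [condEnt, Fintype.sum_option, margFst]
  ring

lemma mul_ent_div_sub_mul_ent_div_le (u v : B → ℝ) {m : ℝ} (hu : ∀ b, 0 ≤ u b)
    (hv : ∀ b, 0 ≤ v b) (hum : ∑ b, u b = m) (hvm : ∑ b, v b = m) :
    m * ent (fun b => u b / m) - m * ent (fun b => v b / m)
      ≤ m * negMulLog ((∑ b, |u b - v b|) / m)
        + (∑ b, |u b - v b|) * (log (Fintype.card B) + 1) := by
  rcases (hum ▸ sum_nonneg fun b _ => hu b : 0 ≤ m).eq_or_lt with rfl | hm
  · have hu0 := (sum_eq_zero_iff_of_nonneg fun b _ => hu b).1 hum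
    have hv0 := (sum_eq_zero_iff_of_nonneg fun b _ => hv b).1 hvm
    simp [hu0 _ (mem_univ _), hv0 _ (mem_univ _)]
  have hrow (w : B → ℝ) (hw : ∀ b, 0 ≤ w b) (hwm : ∑ b, w b = m) (b : B) : w b / m ≤ 1 :=
    div_le_one_of_le₀ (hwm ▸ single_le_sum (fun b _ => hw b) (mem_univ b)) hm.le
  have h := abs_ent_sub_ent_le (fun b => u b / m) (fun b => v b / m)
    (fun b => div_nonneg (hu b) hm.le) (hrow u hu hum) (fun b => div_nonneg (hv b) hm.le)
    (hrow v hv hvm)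
  have hD : ∑ b, |u b / m - v b / m| = (∑ b, |u b - v b|) / m := by
    simp_rw [← sub_div, abs_div, abs_of_pos hm, sum_div]
  rw [hD, entModulus] at h
  calc m * ent (fun b => u b / m) - m * ent (fun b => v b / m)
      = m * (ent (fun b => u b / m) - ent (fun b => v b / m)) := by ring
    _ ≤ m * (negMulLog ((∑ b, |u b - v b|) / m)
          + (∑ b, |u b - v b|) / m * (log (Fintype.card B) + 1)) :=
        mul_le_mul_of_nonneg_left ((le_abs_self _).trans h) hm.le
    _ = _ := by field_simp

lemma condEnt_sub_condEnt_le (u v : A → B → ℝ) (hu : ∀ a b, 0 ≤ u a b) (hv : ∀ a b, 0 ≤ v a b)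
    (hm : margFst u = margFst v) (h1 : ∑ a, margFst u a = 1) :
    condEnt u - condEnt v ≤ entModulus (Fintype.card B) (l1 u v) := by
  set m := margFst u
  set D : A → ℝ := fun a => ∑ b, |u a b - v a b|
  have hrow (a : A) := mul_ent_div_sub_mul_ent_div_le (u a) (v a) (hu a) (hv a) rfl
    (congrFun hm a).symm
  have hmD (a : A) : m a * (D a / m a) = D a := by
    rcases eq_or_ne (m a) 0 with h | h
    · have hu0 := (sum_eq_zero_iff_of_nonneg fun b _ => hu a b).1 h
      have hv0 := (sum_eq_zero_iff_of_nonneg fun b _ => hv a b).1 ((congrFun hm a) ▸ h)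
      simp [h, D, hu0 _ (mem_univ _), hv0 _ (mem_univ _)]
    · exact mul_div_cancel₀ _ h
  have hjensen := sum_mul_negMulLog_le univ m (fun a => D a / m a)
    (fun a _ => margFst_nonneg u hu a)
    (fun a _ => div_nonneg (sum_nonneg fun b _ => abs_nonneg _) (margFst_nonneg u hu a))
  simp only [hmD, h1, div_one, one_mul] at hjensen
  rw [condEnt_eq_sum_mul_ent u, condEnt_eq_sum_mul_ent v, ← hm, ← sum_sub_distrib]
  calc ∑ a, (m a * ent (fun b => u a b / m a) - m a * ent (fun b => v a b / m a))
      ≤ ∑ a, (m a * negMulLog (D a / m a) + D a * (log (Fintype.card B) + 1)) :=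
        sum_le_sum fun a _ => hrow a
    _ ≤ entModulus (Fintype.card B) (l1 u v) := by
        rw [sum_add_distrib, ← sum_mul, entModulus]
        exact add_le_add_left hjensen _

end Entropy

lemma sum_mul_negMulLog_div_margFst {A B : Type*} [Fintype B] (q : A → B → ℝ)
    (hq : ∀ a b, 0 ≤ q a b) (a : A) :
    ∑ b, margFst q a * negMulLog (q a b / margFst q a)
      = ∑ b, negMulLog (q a b) - negMulLog (margFst q a) := by
  rcases eq_or_ne (margFst q a) 0 with h | h
  · have h0 := (sum_eq_zero_iff_of_nonneg fun b _ => hq a b).1 h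
    simp [h, h0 _ (mem_univ _)]
  have hterm (b : B) : margFst q a * negMulLog (q a b / margFst q a)
      = negMulLog (q a b) + q a b * log (margFst q a) := by
    rw [mul_negMulLog_div]
    rcases eq_or_ne (q a b) 0 with h0 | h0
    · simp [h0]
    · rw [log_div h0 h, negMulLog]
      ring
  rw [sum_congr rfl fun b _ => hterm b, sum_add_distrib, ← sum_mul, negMulLog]
  simp only [margFst]
  ring

section MutualInformation

variable {A B : Type*} [Fintype A] [Fintype B]

lemma mi_eq_ent_add_ent_sub (q : A → B → ℝ) (hq : ∀ a b, 0 ≤ q a b) :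
    mi q = ent (margFst q) + ent (margSnd q) - ∑ a, ∑ b, negMulLog (q a b) := by
  rw [mi, condEnt_eq_sum_sum_mul_negMulLog,
    sum_congr rfl fun a _ => sum_mul_negMulLog_div_margFst q hq a, sum_sub_distrib,
    ← ent_eq_sum_negMulLog]
  ring

lemma mi_swap (q : A → B → ℝ) (hq : ∀ a b, 0 ≤ q a b) : mi (fun b a => q a b) = mi q := by
  rw [mi_eq_ent_add_ent_sub _ fun b a => hq a b, mi_eq_ent_add_ent_sub q hq, sum_comm,
    add_comm (ent (margFst q))]
  rfl

end MutualInformation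

section Channels

variable {X Y T : Type*} (p : X → Y → ℝ) (κ : X → T → ℝ)

lemma jointTY_nonneg [Fintype X] [Fintype T] (hp : ∀ x y, 0 ≤ p x y) (hκ : IsChannel κ)
    (t : T) (y : Y) :
    0 ≤ jointTY p κ t y :=
  sum_nonneg fun x _ => mul_nonneg (hp x y) ((hκ x).1 t)

lemma margFst_jointXT [Fintype Y] [Fintype T] (hκ : ∀ x, ∑ t, κ x t = 1) :
    margFst (jointXT p κ) = margFst p :=
  funext fun x => by simp [margFst, jointXT, ← mul_sum, hκ]

lemma margSnd_jointTY [Fintype X] [Fintype T] (hκ : ∀ x, ∑ t, κ x t = 1) :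
    margSnd (jointTY p κ) = margSnd p :=
  funext fun y => by simp only [margSnd, jointTY]; rw [sum_comm]; simp [← mul_sum, hκ]

lemma margFst_jointYT [Fintype X] [Fintype T] (hκ : ∀ x, ∑ t, κ x t = 1) :
    margFst (jointYT p κ) = margSnd p :=
  margSnd_jointTY p κ hκ

lemma margSnd_jointYT [Fintype X] [Fintype Y] : margSnd (jointYT p κ) = margSnd (jointXT p κ) :=
  funext fun t => by simp only [margSnd, jointYT, jointXT, sum_mul]; exact sum_comm

lemma condEnt_jointXT [Fintype X] [Fintype Y] [Fintype T] (hκ : ∀ x, ∑ t, κ x t = 1) :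
    condEnt (jointXT p κ) = ∑ x, margFst p x * ∑ t, negMulLog (κ x t) := by
  rw [condEnt_eq_sum_sum_mul_negMulLog, margFst_jointXT p κ hκ]
  refine sum_congr rfl fun x _ => ?_
  rw [mul_sum]
  refine sum_congr rfl fun t _ => ?_
  rcases eq_or_ne (margFst p x) 0 with h | h
  · simp [h]
  · rw [jointXT, show ∑ y, p x y = margFst p x from rfl, mul_div_cancel_left₀ _ h]

lemma condEnt_jointXT_le_condEnt_jointYT [Fintype X] [Fintype Y] [Fintype T]
    (hp : ∀ x y, 0 ≤ p x y) (hκ : IsChannel κ) :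
    condEnt (jointXT p κ) ≤ condEnt (jointYT p κ) := by
  have hκ1 (x : X) : ∑ t, κ x t = 1 := (hκ x).2
  rw [condEnt_jointXT p κ hκ1, condEnt_eq_sum_sum_mul_negMulLog, margFst_jointYT p κ hκ1]
  calc ∑ x, margFst p x * ∑ t, negMulLog (κ x t)
      = ∑ y, ∑ t, ∑ x, p x y * negMulLog (κ x t) := by
        simp_rw [margFst, sum_mul, mul_sum]
        exact sum_comm.trans (sum_congr rfl fun _ _ => sum_comm)
    _ ≤ ∑ y, ∑ t, margSnd p y * negMulLog (jointYT p κ y t / margSnd p y) :=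
        sum_le_sum fun y _ => sum_le_sum fun t _ =>
          sum_mul_negMulLog_le univ (fun x => p x y) (fun x => κ x t)
            (fun x _ => hp x y) (fun x _ => (hκ x).1 t)

lemma mi_jointTY_le_mi_jointXT [Fintype X] [Fintype Y] [Fintype T] (hp : ∀ x y, 0 ≤ p x y)
    (hκ : IsChannel κ) :
    mi (jointTY p κ) ≤ mi (jointXT p κ) := by
  have hswap : mi (jointTY p κ) = mi (jointYT p κ) :=
    mi_swap (jointYT p κ) fun y t => jointTY_nonneg p κ hp hκ t y
  rw [hswap, mi, mi, margSnd_jointYT]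
  linarith [condEnt_jointXT_le_condEnt_jointYT p κ hp hκ]

lemma mi_jointTY_le_ent [Fintype X] [Fintype Y] [Fintype T] (hp : ∀ x y, 0 ≤ p x y)
    (hκ : IsChannel κ) :
    mi (jointTY p κ) ≤ ent (margSnd p) := by
  rw [mi, margSnd_jointTY p κ fun x => (hκ x).2]
  linarith [condEnt_nonneg (jointTY p κ) (jointTY_nonneg p κ hp hκ)]

end Channels

lemma IBcurve_le_min {X Y : Type*} [Fintype X] [Fintype Y] (p : X → Y → ℝ) (hp : IsJoint p)
    {r : ℝ} (hr : 0 ≤ r) : IBcurve p r ≤ min r (ent (margSnd p)) := by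
  have hconst : mi (jointXT p fun _ (_ : Fin 1) => (1 : ℝ)) = 0 := by
    rw [mi, condEnt_jointXT p (fun _ (_ : Fin 1) => (1 : ℝ)) (by simp), ent_eq_sum_negMulLog]
    simp [margSnd, jointXT, hp.2]
  refine csSup_le ⟨mi (jointTY p fun _ (_ : Fin 1) => (1 : ℝ)), 1, _,
    fun _ => ⟨fun _ => zero_le_one, by simp⟩, hconst.trans_le hr, rfl⟩ ?_
  rintro v ⟨n, κ, hκ, hXT, rfl⟩
  exact le_min ((mi_jointTY_le_mi_jointXT p κ hp.1 hκ).trans hXT) (mi_jointTY_le_ent p κ hp.1 hκ)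

section Pushforward

variable {A A' B : Type*} [Fintype A] [DecidableEq A'] (f : A → A')

def mapFst (p : A → B → ℝ) : A' → B → ℝ := fun a' b => ∑ a, if f a = a' then p a b else 0

lemma mapFst_nonneg {p : A → B → ℝ} (hp : ∀ a b, 0 ≤ p a b) (a' : A') (b : B) :
    0 ≤ mapFst f p a' b :=
  sum_nonneg fun a _ => by split_ifs <;> simp [hp a b]

lemma margSnd_mapFst [Fintype A'] (p : A → B → ℝ) : margSnd (mapFst f p) = margSnd p :=
  funext fun b => by simp only [margSnd, mapFst]; rw [sum_comm]; simp

lemma margFst_mapFst [Fintype B] (p : A → B → ℝ) (a' : A') :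
    margFst (mapFst f p) a' = ∑ a, if f a = a' then margFst p a else 0 := by
  simp only [margFst, mapFst]
  rw [sum_comm]
  exact sum_congr rfl fun a _ => by split_ifs <;> simp

lemma sum_margFst_mapFst [Fintype A'] [Fintype B] (p : A → B → ℝ) :
    ∑ a', margFst (mapFst f p) a' = ∑ a, margFst p a := by
  simp only [margFst_mapFst]
  rw [sum_comm]
  simp

lemma isJoint_mapFst [Fintype A'] [Fintype B] {p : A → B → ℝ} (hp : IsJoint p) :
    IsJoint (mapFst f p) :=
  ⟨mapFst_nonneg f hp.1, (sum_margFst_mapFst f p).trans hp.2⟩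

lemma l1_mapFst_le [Fintype A'] [Fintype B] (p q : A → B → ℝ) :
    l1 (mapFst f p) (mapFst f q) ≤ l1 p q := by
  calc l1 (mapFst f p) (mapFst f q)
      ≤ ∑ a', ∑ b, ∑ a, if f a = a' then |p a b - q a b| else 0 :=
        sum_le_sum fun a' _ => sum_le_sum fun b _ => by
          rw [mapFst, mapFst, ← sum_sub_distrib]
          refine (abs_sum_le_sum_abs _ _).trans_eq (sum_congr rfl fun a _ => ?_)
          split_ifs <;> simp
    _ = l1 p q := by
        rw [l1, sum_comm]
        refine (sum_congr rfl fun b _ => sum_comm).trans ?_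
        rw [sum_comm]
        simp

lemma determ_mapFst {p : A → A' → ℝ} (hdet : Determ p f) : Determ (mapFst f p) id :=
  fun a' b hb => sum_eq_zero fun a _ => by
    split_ifs with h
    · exact hdet a b (h ▸ hb)
    · rfl

end Pushforward

lemma gam_eq (ε : ℝ) (c : ℕ) : gam ε c = 3 * negMulLog ε + 5 * ε * log c := by
  rw [gam, negMulLog]
  ring

/-- The constants work out because `2 / e + 2 ≤ 4 log 2 ≤ -log ε + 3 log c`. -/
lemma two_mul_entModulus_le_gam {c : ℕ} {δ ε : ℝ} (hδ : 0 ≤ δ) (hδε : δ ≤ ε) (hε : ε ≤ 1 / 2)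
    (hc : δ = 0 ∨ 2 ≤ c) : 2 * entModulus c δ ≤ gam ε c := by
  have hε0 : 0 ≤ ε := hδ.trans hδε
  have hlogc : 0 ≤ log c := log_natCast_nonneg c
  have hηε : 0 ≤ negMulLog ε := negMulLog_nonneg hε0 (by linarith)
  rw [gam_eq, entModulus]
  rcases hc with rfl | hc
  · simp only [negMulLog_zero, zero_mul, add_zero, mul_zero]
    positivity
  rcases hε0.eq_or_lt with rfl | hεpos
  · obtain rfl : δ = 0 := le_antisymm hδε hδ
    simp
  have hη := negMulLog_le_negMulLog_add hδ hδε (by linarith)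
  have hlog2c : log 2 ≤ log c := log_le_log (by norm_num) (by exact_mod_cast hc)
  have hlog2ε : log 2 ≤ -log ε := by
    rw [← log_inv]
    exact log_le_log (by norm_num) (by rw [le_inv_comm₀ (by norm_num) hεpos]; linarith)
  have hnum : 2 / exp 1 + 2 ≤ 4 * log 2 := by
    have he := exp_one_gt_d9
    have h2 := log_two_gt_d9
    have : 2 / exp 1 < 2 / 2.7182818283 := div_lt_div_of_pos_left (by norm_num) (by norm_num) he
    linarith
  have h₁ : ε * (2 / exp 1 + 2) ≤ ε * (4 * log 2) := mul_le_mul_of_nonneg_left hnum hε0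
  have h₂ : ε * log 2 ≤ ε * -log ε := mul_le_mul_of_nonneg_left hlog2ε hε0
  have h₃ : ε * log 2 ≤ ε * log c := mul_le_mul_of_nonneg_left hlog2c hε0
  have h₄ : δ * (log c + 1) ≤ ε * (log c + 1) := mul_le_mul_of_nonneg_right hδε (by linarith)
  have hηε' : negMulLog ε = ε * -log ε := by rw [negMulLog]; ring
  have h₅ : ε * (2 / exp 1 + 2) = 2 * (ε / exp 1) + 2 * ε := by ring
  linarith

lemma condEnt_add_abs_ent_sub_ent_le_gam {A : Type*} [Fintype A] {q q' : A → A → ℝ} {ε : ℝ}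
    (hq : IsJoint q) (hq' : ∀ a b, 0 ≤ q' a b) (hdet : Determ q' id)
    (hm : margFst q = margFst q') (hl1 : l1 q q' ≤ ε) (hε : ε ≤ 1 / 2) :
    condEnt q + |ent (margFst q) - ent (margSnd q)| ≤ gam ε (Fintype.card A) := by
  have hq'1 : IsJoint q' := ⟨hq', by rw [← hq.2]; exact congrArg (∑ a, · a) hm.symm⟩
  have hcond : condEnt q ≤ entModulus (Fintype.card A) (l1 q q') := by
    have := condEnt_sub_condEnt_le q q' hq.1 hq' hm hq.2
    rwa [condEnt_eq_zero_of_determ q' id hdet, sub_zero] at this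
  have hent : |ent (margFst q) - ent (margSnd q)|
      ≤ entModulus (Fintype.card A) (∑ b, |margSnd q b - margSnd q' b|) := by
    rw [hm, margFst_eq_margSnd_of_determ_id q' hdet, abs_sub_comm]
    exact abs_ent_sub_ent_le _ _ (margSnd_nonneg hq) (margSnd_le_one hq) (margSnd_nonneg hq'1)
      (margSnd_le_one hq'1)
  have hδ₁ := sum_abs_margSnd_sub_le_l1 q q'
  have hδ₁0 : 0 ≤ ∑ b, |margSnd q b - margSnd q' b| := sum_nonneg fun b _ => abs_nonneg _
  have hδ0 : 0 ≤ l1 q q' := hδ₁0.trans hδ₁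
  have hsmall : l1 q q' = 0 ∨ 2 ≤ Fintype.card A := by
    rcases le_or_gt 2 (Fintype.card A) with h | h
    · exact .inr h
    · have : Subsingleton A := Fintype.card_le_one_iff_subsingleton.1 (by omega)
      exact .inl (l1_eq_zero_of_subsingleton hm)
  have h₁ := two_mul_entModulus_le_gam hδ₁0 (hδ₁.trans hl1) hε
    (hsmall.imp_left fun h => le_antisymm (h ▸ hδ₁) hδ₁0)
  have h₂ := two_mul_entModulus_le_gam hδ0 hl1 hε hsmall
  linarith

lemma condEnt_mapFst_add_abs_ent_sub_ent_le_gam {X Y : Type*} [Fintype X] [Fintype Y]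
    [DecidableEq Y] {p p' : X → Y → ℝ} (f : X → Y) {ε : ℝ} (hp : IsJoint p)
    (hp' : ∀ x y, 0 ≤ p' x y) (hdet : Determ p' f) (hm : ∀ x, margFst p x = margFst p' x)
    (hl1 : l1 p p' ≤ ε) (hε : ε ≤ 1 / 2) :
    condEnt (mapFst f p) + |ent (margFst (mapFst f p)) - ent (margSnd p)|
      ≤ gam ε (Fintype.card Y) := by
  rw [← margSnd_mapFst f p]
  exact condEnt_add_abs_ent_sub_ent_le_gam (isJoint_mapFst f hp) (mapFst_nonneg f hp')
    (determ_mapFst f hdet) (funext fun y => by simp only [margFst_mapFst, hm])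
    ((l1_mapFst_le f p p').trans hl1) hε

section TrivialBottleneck

variable {X Y : Type*} [DecidableEq Y] (p : X → Y → ℝ) (f : X → Y) (α : ℝ)

lemma kappaAlpha_some (x : X) (y : Y) : kappaAlpha f α x (some y) = if f x = y then α else 0 := by
  simp [kappaAlpha, eq_comm]

lemma kappaAlpha_none (x : X) : kappaAlpha f α x none = 1 - α := by
  simp [kappaAlpha]

lemma sum_kappaAlpha [Fintype Y] (x : X) : ∑ t, kappaAlpha f α x t = 1 := by
  simp [Fintype.sum_option, kappaAlpha_some, kappaAlpha_none]

lemma sum_negMulLog_kappaAlpha [Fintype Y] (x : X) :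
    ∑ t, negMulLog (kappaAlpha f α x t) = negMulLog (1 - α) + negMulLog α := by
  simp [Fintype.sum_option, kappaAlpha_some, kappaAlpha_none, apply_ite]

lemma mi_jointXT_kappaAlpha [Fintype X] [Fintype Y] (hp : ∑ x, ∑ y, p x y = 1) :
    mi (jointXT p (kappaAlpha f α)) = α * ent (margFst (mapFst f p)) := by
  have hsome (y : Y) : margSnd (jointXT p (kappaAlpha f α)) (some y)
      = α * margFst (mapFst f p) y := by
    rw [margFst_mapFst, mul_sum]
    refine sum_congr rfl fun x _ => ?_
    rw [jointXT, kappaAlpha_some]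
    split_ifs <;> simp [margFst, mul_comm]
  have hnone : margSnd (jointXT p (kappaAlpha f α)) none = 1 - α := by
    simp [margSnd, jointXT, kappaAlpha_none, ← sum_mul, hp]
  have hY : ∑ y, margFst (mapFst f p) y = 1 := (sum_margFst_mapFst f p).trans hp
  rw [mi, condEnt_jointXT p _ (sum_kappaAlpha f α)]
  simp only [sum_negMulLog_kappaAlpha, ← sum_mul, margFst, hp]
  rw [ent_eq_sum_negMulLog, Fintype.sum_option, hnone]
  simp only [hsome, negMulLog_mul, sum_add_distrib, ← sum_mul, ← mul_sum, hY,
    ← ent_eq_sum_negMulLog]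
  ring

lemma mi_jointTY_kappaAlpha [Fintype X] [Fintype Y] (hp : ∑ x, ∑ y, p x y = 1) :
    mi (jointTY p (kappaAlpha f α)) = α * mi (mapFst f p) := by
  have hsome : (fun y b => jointTY p (kappaAlpha f α) (some y) b)
      = fun y b => α * mapFst f p y b := by
    funext y b
    simp only [jointTY, mapFst, kappaAlpha_some, mul_sum]
    exact sum_congr rfl fun x _ => by split_ifs <;> ring
  have hnone (b : Y) : jointTY p (kappaAlpha f α) none b = (1 - α) * margSnd p b := by
    simp [jointTY, kappaAlpha_none, margSnd, mul_sum, mul_comm]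
  have hY : ∑ b, margSnd p b = 1 := sum_comm.trans hp
  have hmnone : margFst (jointTY p (kappaAlpha f α)) none = 1 - α := by
    simp only [margFst, hnone, ← mul_sum, hY, mul_one]
  rw [mi, condEnt_option, hsome, condEnt_const_mul, margSnd_jointTY p _ (sum_kappaAlpha f α)]
  simp only [hnone, hmnone, mul_log_mul_div_self, ← mul_sum]
  rw [mi, margSnd_mapFst, ent]
  ring

end TrivialBottleneck

/-- Suppose `Y = f(X)` under `ptilde`, and `p` has the same `X`-marginal with
`|p - ptilde|₁ ≤ ε ≤ 1/2`.  Set `γ := -3ε log ε + 5ε log |𝒴|` and let `F` be the IB curve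
of `p`.  Then for any `r > 0` there is an `α ∈ [0,1]` such that the trivial bottleneck
variable `T_α` (given by the channel `kappaAlpha f α`) satisfies `I_p(X;T_α) ≤ r` and
`I_p(Y;T_α) ≥ F(r) - γ`. -/
theorem trivial_solutions_near_IB_curve {X Y : Type*} [Fintype X] [Fintype Y] [DecidableEq Y]
    (p ptilde : X → Y → ℝ) (f : X → Y) (ε : ℝ)
    (hp : IsJoint p) (hptilde : IsJoint ptilde) (hdet : Determ ptilde f)
    (hmarg : ∀ x, margFst p x = margFst ptilde x)
    (hl1 : l1 p ptilde ≤ ε) (hε : ε ≤ 1/2) :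
    ∀ r > 0, ∃ α ∈ Set.Icc (0:ℝ) 1,
      mi (jointXT p (kappaAlpha f α)) ≤ r ∧
      mi (jointTY p (kappaAlpha f α)) ≥ IBcurve p r - gam ε (Fintype.card Y) := by
  intro r hr
  have hbound := condEnt_mapFst_add_abs_ent_sub_ent_le_gam f hp hptilde.1 hdet hmarg hl1 hε
  set HZ := ent (margFst (mapFst f p))
  set HY := ent (margSnd p)
  have hXT (α : ℝ) : mi (jointXT p (kappaAlpha f α)) = α * HZ := mi_jointXT_kappaAlpha p f α hp.2
  have hTY (α : ℝ) : mi (jointTY p (kappaAlpha f α)) = α * (HY - condEnt (mapFst f p)) := by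
    rw [mi_jointTY_kappaAlpha p f α hp.2, mi, margSnd_mapFst]
  have hF := IBcurve_le_min p hp hr.le
  have hcond := condEnt_nonneg _ (mapFst_nonneg f hp.1)
  have habs := abs_nonneg (HZ - HY)
  rcases le_or_gt HZ r with hHZ | hHZ
  · refine ⟨1, ⟨zero_le_one, le_rfl⟩, by rwa [hXT, one_mul], ?_⟩
    rw [hTY, one_mul]
    linarith [min_le_right r HY]
  · have hHZ0 : 0 < HZ := hr.trans hHZ
    have hα0 : 0 ≤ r / HZ := by positivity
    have hα1 : r / HZ ≤ 1 := (div_le_one hHZ0).2 hHZ.le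
    refine ⟨r / HZ, ⟨hα0, hα1⟩, by rw [hXT, div_mul_cancel₀ _ hHZ0.ne'], ?_⟩
    have hY : r / HZ * (HZ - HY) ≤ |HZ - HY| :=
      (mul_le_mul_of_nonneg_left (le_abs_self _) hα0).trans (mul_le_of_le_one_left habs hα1)
    have hC : r / HZ * condEnt (mapFst f p) ≤ condEnt (mapFst f p) :=
      mul_le_of_le_one_left hcond hα1
    rw [mul_sub, div_mul_cancel₀ _ hHZ0.ne'] at hY
    rw [hTY, mul_sub]
    linarith [min_le_left r HY]
end
end

section
/- Let X be a random variable (continuous or discrete), Y a random variable with finite outcome set 𝒴, and suppose Y = f(X) for a single-valued function f. For α ∈ [0,1] let B_α be a Bernoulli(α) random variable independent of X, and define T_α := B_α · f(X), i.e., T_α equals Y with probability α and equals the symbol 0 (outside 𝒴) with probability 1−α. Then for every α ∈ [0,1]: I(X;T_α) = I(Y;T_α); moreover I(Y;T₀) = 0, I(Y;T₁) = H(Y), and the map α ↦ I(Y;T_α) is continuous on [0,1]. -/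
noncomputable section

section Aux

variable {X Y : Type*} [Fintype X] [Fintype Y] [DecidableEq Y]

lemma sum_kappa {A : Type*} (g : A → Y) (α : ℝ) (a : A) :
    ∑ t : Option Y, kappaAlpha g α a t = 1 := by
  rw [Fintype.sum_option]
  simp [kappaAlpha, Finset.sum_add_distrib, ← Finset.mul_sum, Finset.sum_ite_eq']

lemma kappa_row_entropy {A : Type*} (g : A → Y) (α : ℝ) (a : A) :
    ∑ t : Option Y, kappaAlpha g α a t * Real.log (kappaAlpha g α a t)
      = α * Real.log α + (1 - α) * Real.log (1 - α) := by
  rw [Fintype.sum_option]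
  simp only [kappaAlpha]
  have h1 : ∑ y : Y, (α * (if (some y : Option Y) = some (g a) then 1 else 0) +
      (1 - α) * (if (some y : Option Y) = (none : Option Y) then 1 else 0)) *
      Real.log (α * (if (some y : Option Y) = some (g a) then 1 else 0) +
      (1 - α) * (if (some y : Option Y) = (none : Option Y) then 1 else 0))
      = α * Real.log α := by
    rw [Finset.sum_eq_single (g a)]
    · simp
    · intro y _ hy; simp [hy]
    · simp
  rw [h1]
  simp
  ring

lemma condEnt_mix {A : Type*} [Fintype A] (w : A → ℝ) (g : A → Y) (α : ℝ)
    (hw : ∑ a, w a = 1) :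
    condEnt (fun a t => w a * kappaAlpha g α a t)
      = -(α * Real.log α + (1 - α) * Real.log (1 - α)) := by
  unfold condEnt
  have hmf : ∀ a, margFst (fun a t => w a * kappaAlpha g α a t) a = w a := by
    intro a
    unfold margFst
    rw [← Finset.mul_sum, sum_kappa, mul_one]
  have key : ∀ a, ∑ t : Option Y, w a * kappaAlpha g α a t *
      Real.log (w a * kappaAlpha g α a t /
        margFst (fun a t => w a * kappaAlpha g α a t) a)
      = w a * (α * Real.log α + (1 - α) * Real.log (1 - α)) := by
    intro a
    rw [hmf]
    by_cases h : w a = 0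
    · simp [h]
    · have step : ∀ t : Option Y, w a * kappaAlpha g α a t *
          Real.log (w a * kappaAlpha g α a t / w a)
          = w a * (kappaAlpha g α a t * Real.log (kappaAlpha g α a t)) := by
        intro t
        rw [mul_div_cancel_left₀ _ h]
        ring
      rw [Finset.sum_congr rfl fun t _ => step t, ← Finset.mul_sum,
        kappa_row_entropy]
  rw [Finset.sum_congr rfl fun a _ => key a, ← Finset.sum_mul, hw, one_mul]

lemma margSnd_joint_eq {T : Type*} (p : X → Y → ℝ) (κ : X → T → ℝ) :
    margSnd (jointYT p κ) = margSnd (jointXT p κ) := by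
  funext t
  simp only [margSnd, jointYT, jointXT]
  rw [Finset.sum_comm]
  exact Finset.sum_congr rfl fun x _ => (Finset.sum_mul _ _ _).symm

lemma jointYT_eq (p : X → Y → ℝ) (f : X → Y) (hdet : Determ p f) (α : ℝ) :
    jointYT p (kappaAlpha f α)
      = fun y t => margSnd p y * kappaAlpha (id : Y → Y) α y t := by
  funext y t
  simp only [jointYT, margSnd, Finset.sum_mul]
  apply Finset.sum_congr rfl
  intro x _
  by_cases h : p x y = 0
  · simp [h]
  · have hfy : f x = y := by
      by_contra hne
      exact h (hdet x y fun hh => hne hh.symm)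
    rw [kappaAlpha, kappaAlpha, hfy]
    simp

lemma sum_margSnd (p : X → Y → ℝ) (hp : IsJoint p) : ∑ y, margSnd p y = 1 := by
  simp only [margSnd]
  rw [Finset.sum_comm]
  exact hp.2

lemma sum_margFst (p : X → Y → ℝ) (hp : IsJoint p) : ∑ x, margFst p x = 1 := hp.2

lemma mi_YT_eq (p : X → Y → ℝ) (f : X → Y) (hp : IsJoint p) (hdet : Determ p f)
    (α : ℝ) :
    mi (jointYT p (kappaAlpha f α)) = α * ent (margSnd p) := by
  set m := margSnd p with hm
  have hsum : ∑ y, m y = 1 := sum_margSnd p hp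
  rw [jointYT_eq p f hdet α]
  have hmarg : margSnd (fun y t => m y * kappaAlpha (id : Y → Y) α y t)
      = fun t : Option Y =>
        Option.elim t (1 - α) (fun y0 => α * m y0) := by
    funext t
    cases t with
    | none =>
      simp only [margSnd, kappaAlpha, Option.elim]
      simp [← Finset.sum_mul, hsum]
    | some y0 =>
      simp only [margSnd, kappaAlpha, Option.elim]
      rw [Finset.sum_eq_single y0]
      · simp [mul_comm]
      · intro y _ hy; simp [hy, Ne.symm hy]
      · simp
  have hent : ent (margSnd (fun y t => m y * kappaAlpha (id : Y → Y) α y t))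
      = -((1 - α) * Real.log (1 - α)) - α * Real.log α + α * ent m := by
    rw [hmarg]
    unfold ent
    rw [Fintype.sum_option]
    simp only [Option.elim]
    have hy : ∑ y : Y, α * m y * Real.log (α * m y)
        = α * Real.log α + α * ∑ y, m y * Real.log (m y) := by
      have hpt : ∀ y : Y, α * m y * Real.log (α * m y)
          = α * Real.log α * m y + α * (m y * Real.log (m y)) := by
        intro y
        by_cases hα : α = 0
        · simp [hα]
        · by_cases hmy : m y = 0
          · simp [hmy]
          · rw [Real.log_mul hα hmy]; ring
      rw [Finset.sum_congr rfl fun y _ => hpt y, Finset.sum_add_distrib,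
        ← Finset.mul_sum, ← Finset.mul_sum, hsum, mul_one]
    rw [hy]
    ring
  rw [mi, hent, condEnt_mix m (id : Y → Y) α hsum]
  ring

end Aux

/-- Suppose `Y = f(X)` (with `Y` finite) and let `T_α := B_α ⬝ f(X)` as
above.  Then for every `α ∈ [0,1]`, `I(X;T_α) = I(Y;T_α)`; moreover `I(Y;T₀) = 0`,
`I(Y;T₁) = H(Y)`, and `α ↦ I(Y;T_α)` is continuous on `[0,1]`. -/
theorem mixture_solutions_sweep_IB_curve {X Y : Type*} [Fintype X] [Fintype Y] [DecidableEq Y]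
    (p : X → Y → ℝ) (f : X → Y)
    (hp : IsJoint p) (hdet : Determ p f) :
    (∀ α ∈ Set.Icc (0:ℝ) 1,
        mi (jointXT p (kappaAlpha f α)) = mi (jointYT p (kappaAlpha f α))) ∧
    mi (jointYT p (kappaAlpha f 0)) = 0 ∧
    mi (jointYT p (kappaAlpha f 1)) = ent (margSnd p) ∧
    ContinuousOn (fun α => mi (jointYT p (kappaAlpha f α))) (Set.Icc (0:ℝ) 1) := by
  have hmi : ∀ α : ℝ, mi (jointYT p (kappaAlpha f α)) = α * ent (margSnd p) :=
    mi_YT_eq p f hp hdet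
  refine ⟨?_, ?_, ?_, ?_⟩
  · intro α _
    have hXT : jointXT p (kappaAlpha f α)
        = fun x t => margFst p x * kappaAlpha f α x t := rfl
    rw [mi, mi, margSnd_joint_eq p (kappaAlpha f α), hXT,
      condEnt_mix (margFst p) f α (sum_margFst p hp),
      jointYT_eq p f hdet α,
      condEnt_mix (margSnd p) (id : Y → Y) α (sum_margSnd p hp)]
  · rw [hmi 0, zero_mul]
  · rw [hmi 1, one_mul]
  · have : (fun α => mi (jointYT p (kappaAlpha f α)))
        = fun α : ℝ => α * ent (margSnd p) := funext hmi
    rw [this]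
    exact (continuous_id.mul continuous_const).continuousOn
end
end
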